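/- (Proposition 6.) Let f be an odd positive integer, χ a Dirichlet character modulo f with values in ℂ, and k a positive integer. Then the analytic continuation of the Dirichlet l-series l(s,χ) = 2 Σ_{n≥1} χ(n)(-1)^n n^{-s}, given by L(s) := f^{-s} Σ_{a=1}^{f} χ(a)(-1)^a ζ_E(s, a/f), satisfies L(-k) = E_{k,χ}, where E_{k,χ} = f^k Σ_{a=0}^{f-1} χ(a)(-1)^a E_k(a/f). -/
import Mathlib


open Complex

/-- The Euler numbers `E₀ = 1`, `∑_{k=0}^{n} C(n,k) Eₖ + Eₙ = 0` for `n ≥ 1`. -/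
noncomputable def eulerNumber : ℕ → ℚ
  | 0 => 1
  | n + 1 => (-1/2) * ∑ k ∈ (Finset.range (n+1)).attach,
      ((n+1).choose k.1 : ℚ) * eulerNumber k.1
  decreasing_by exact Finset.mem_range.mp k.2

/-- The Euler polynomials `Eₙ(x) = ∑_{k=0}^n C(n,k) Eₖ x^{n-k}`. -/
noncomputable def eulerPoly (n : ℕ) (x : ℚ) : ℚ :=
  ∑ k ∈ Finset.range (n+1), (n.choose k : ℚ) * eulerNumber k * x ^ (n - k)

/-- The analytic continuation of the Euler zeta function,
`ζ_E(s,x) = 2^{1-s} (ζ_H(s, x/2) − ζ_H(s, (x+1)/2))`. -/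
noncomputable def eulerZetaC (s : ℂ) (x : ℝ) : ℂ :=
  (2 : ℂ) ^ ((1 : ℂ) - s) *
    (HurwitzZeta.hurwitzZeta (↑(x / 2) : UnitAddCircle) s -
     HurwitzZeta.hurwitzZeta (↑((x + 1) / 2) : UnitAddCircle) s)

section AuxEulerProof

open Polynomial

noncomputable def EP (n : ℕ) : Polynomial ℚ :=
  ∑ k ∈ Finset.range (n+1), C ((n.choose k : ℚ) * eulerNumber k) * X ^ (n-k)

lemma EP_eval (n : ℕ) (x : ℚ) : (EP n).eval x = eulerPoly n x := by
  simp [EP, eulerPoly, eval_finset_sum]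

lemma EP_deriv (n : ℕ) : derivative (EP (n+1)) = Polynomial.C ((n:ℚ)+1) * EP n := by
  rw [EP, derivative_sum]
  rw [Finset.sum_range_succ]
  have hlast : derivative (C (((n+1).choose (n+1) : ℚ) * eulerNumber (n+1)) * X ^ (n+1-(n+1))) = 0 := by
    simp
  rw [hlast, add_zero, EP, Finset.mul_sum]
  refine Finset.sum_congr rfl fun k hk => ?_
  have hk' : k ≤ n := Nat.lt_succ_iff.mp (Finset.mem_range.mp hk)
  have h1 : n + 1 - k - 1 = n - k := by omega
  have hnat : (n+1-k) * ((n+1).choose k) = (n+1) * n.choose k := by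
    rw [mul_comm, ← Nat.choose_succ_right_eq]
    exact (Nat.add_one_mul_choose_eq n k).symm
  have hq : ((n+1-k : ℕ) : ℚ) * (((n+1).choose k : ℕ) : ℚ) = ((n+1 : ℕ) : ℚ) * ((n.choose k : ℕ) : ℚ) := by
    exact_mod_cast congrArg (Nat.cast : ℕ → ℚ) hnat
  rw [derivative_C_mul, derivative_X_pow, h1, ← mul_assoc, ← C_mul, ← mul_assoc, ← C_mul]
  congr 1
  rw [C_inj]
  push_cast [Nat.cast_sub (by omega : k ≤ n+1)] at hq ⊢
  linear_combination eulerNumber k * hq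

noncomputable def uu : Polynomial ℚ := C (1/2 : ℚ) * (X + 1)
noncomputable def vv : Polynomial ℚ := C (1/2 : ℚ) * X

lemma deriv_uu : derivative uu = C (1/2 : ℚ) := by simp [uu]
lemma deriv_vv : derivative vv = C (1/2 : ℚ) := by simp [vv]

lemma eulerNumber_succ (n : ℕ) :
    eulerNumber (n+1) = (-1/2) * ∑ k ∈ Finset.range (n+1), ((n+1).choose k : ℚ) * eulerNumber k := by
  rw [eulerNumber]
  congr 1
  exact Finset.sum_attach (Finset.range (n+1)) (fun i => ((n+1).choose i : ℚ) * eulerNumber i)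

lemma sumE (n : ℕ) (hn : 1 ≤ n) :
    ∑ k ∈ Finset.range (n+1), (n.choose k : ℚ) * eulerNumber k = - eulerNumber n := by
  obtain ⟨m, rfl⟩ := Nat.exists_eq_add_of_le hn
  rw [Finset.sum_range_succ, Nat.choose_self]
  have h := eulerNumber_succ m
  have h2 : ∑ k ∈ Finset.range (m+1), ((m+1).choose k : ℚ) * eulerNumber k = -2 * eulerNumber (m+1) := by
    rw [h]; ring
  rw [show 1 + m = m + 1 by ring] at *
  rw [h2]; push_cast; ring

lemma eulerPoly_zero (n : ℕ) : eulerPoly n 0 = eulerNumber n := by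
  rw [eulerPoly, Finset.sum_eq_single n]
  · simp
  · intro k hk hne
    rw [zero_pow (by have := Finset.mem_range.mp hk; omega), mul_zero]
  · simp

lemma eulerPoly_one_add_zero (n : ℕ) (hn : 1 ≤ n) : eulerPoly n 1 + eulerPoly n 0 = 0 := by
  have h1 : eulerPoly n 1 = ∑ k ∈ Finset.range (n+1), (n.choose k : ℚ) * eulerNumber k := by
    simp [eulerPoly]
  rw [h1, sumE n hn, eulerPoly_zero]; ring

lemma bernoulli_poly_one : Polynomial.bernoulli 1 = X - C (1/2 : ℚ) := by
  simp [Polynomial.bernoulli, Finset.sum_range_succ, monomial_zero_left, ← monomial_one_one_eq_X]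
  rw [sub_eq_add_neg, ← C_neg]
  norm_num

lemma key (k : ℕ) : C ((k:ℚ)+1) * EP k
    = C ((2:ℚ)^(k+1)) *
      ((Polynomial.bernoulli (k+1)).comp uu - (Polynomial.bernoulli (k+1)).comp vv) := by
  induction k with
  | zero =>
      have he0 : eulerNumber 0 = 1 := by rw [eulerNumber]
      rw [bernoulli_poly_one]
      simp [EP, he0, sub_comp, uu, vv]
      rw [show (C (2⁻¹:ℚ)) * (X+1) - C (2⁻¹:ℚ) * X = C 2⁻¹ by ring, ← C_mul]
      norm_num
  | succ n ih =>
      set B := Polynomial.bernoulli (n+1+1) with hB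
      set a : ℚ := ((n+1:ℕ):ℚ) + 1 with ha
      show C a * EP (n+1) = C ((2:ℚ)^(n+1+1)) * (B.comp uu - B.comp vv)
      have hdB : derivative B = C a * Polynomial.bernoulli (n+1) := by
        rw [hB, Polynomial.derivative_bernoulli_add_one, ha, map_add, C_eq_natCast, map_one]
      have e2 : (C ((2:ℚ)^(n+1+1)) * C (1/2 : ℚ) : Polynomial ℚ) = C ((2:ℚ)^(n+1)) := by
        rw [← C_mul]; congr 1; rw [pow_succ]; ring
      have hderiv : derivative (C a * EP (n+1) - C ((2:ℚ)^(n+1+1)) * (B.comp uu - B.comp vv)) = 0 := by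
        rw [derivative_sub, derivative_C_mul, derivative_C_mul, EP_deriv,
          derivative_sub, derivative_comp, derivative_comp, hdB, deriv_uu, deriv_vv,
          mul_comp, C_comp, mul_comp, C_comp, sub_eq_zero]
        rw [← e2] at ih
        linear_combination (C a) * ih
      obtain ⟨c, hc⟩ : ∃ c, C a * EP (n+1) - C ((2:ℚ)^(n+1+1)) * (B.comp uu - B.comp vv) = C c :=
        ⟨_, eq_C_of_derivative_eq_zero hderiv⟩
      have h0 := congrArg (eval 0) hc
      have h1 := congrArg (eval 1) hc
      have hep := eulerPoly_one_add_zero (n+1) (by omega)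
      have hB10 : B.eval 1 = B.eval 0 := by
        have h := Polynomial.bernoulli_eval_one_add (n+1+1) 0
        rw [show ((1:ℚ)+0) = 1 by ring, show (n+1+1)-1 = n+1 from rfl,
          zero_pow (Nat.succ_ne_zero n), mul_zero, add_zero] at h
        exact h
      simp only [eval_sub, eval_mul, eval_C, eval_comp, uu, vv, eval_add, eval_one,
        eval_X, EP_eval] at h0 h1
      norm_num at h0 h1
      have hcz : c = 0 := by
        have hsum : c + c = 0 := by
          linear_combination (-1:ℚ) * h0 - h1 + a * hep - (2:ℚ)^(n+1+1) * hB10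
        linarith
      rw [hcz, map_zero, sub_eq_zero] at hc
      exact hc

lemma euZ (k : ℕ) (hk : k ≠ 0) (q : ℚ) (h0 : 0 ≤ q) (h1 : q ≤ 1) :
    eulerZetaC (-(k:ℂ)) ((q:ℝ)) = ((eulerPoly k q : ℚ) : ℂ) := by
  have hq0 : (0:ℝ) ≤ (q:ℝ) := by exact_mod_cast h0
  have hq1 : (q:ℝ) ≤ 1 := by exact_mod_cast h1
  have hx1 : ((q:ℝ))/2 ∈ Set.Icc (0:ℝ) 1 := ⟨by linarith, by linarith⟩
  have hx2 : (((q:ℝ))+1)/2 ∈ Set.Icc (0:ℝ) 1 := ⟨by linarith, by linarith⟩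
  rw [eulerZetaC, HurwitzZeta.hurwitzZeta_neg_nat hk hx1, HurwitzZeta.hurwitzZeta_neg_nat hk hx2]
  have h2 : ((1:ℂ) - (-(k:ℂ))) = ((k+1 : ℕ) : ℂ) := by push_cast; ring
  rw [h2, Complex.cpow_natCast]
  have e1 : ((((q:ℚ):ℝ)/2 : ℝ) : ℂ) = (((q/2 : ℚ) : ℚ) : ℂ) := by push_cast; ring
  have e2 : (((((q:ℚ):ℝ)+1)/2 : ℝ) : ℂ) = ((((q+1)/2 : ℚ) : ℚ) : ℂ) := by push_cast; ring
  rw [e1, e2]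
  have he : ∀ r : ℚ, ((Polynomial.bernoulli (k+1)).map (algebraMap ℚ ℂ)).eval ((r:ℚ):ℂ)
      = (((Polynomial.bernoulli (k+1)).eval r : ℚ) : ℂ) := fun r => by
    rw [← eq_ratCast (algebraMap ℚ ℂ) r, Polynomial.eval_map, Polynomial.eval₂_at_apply,
      eq_ratCast]
  rw [he, he]
  have hkey := congrArg (Polynomial.eval q) (key k)
  simp only [Polynomial.eval_mul, Polynomial.eval_C, Polynomial.eval_comp, uu, vv,
    Polynomial.eval_sub, Polynomial.eval_add, Polynomial.eval_one, Polynomial.eval_X,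
    EP_eval] at hkey
  rw [show (1:ℚ)/2 * (q+1) = (q+1)/2 by ring, show (1:ℚ)/2 * q = q/2 by ring] at hkey
  have hkC := congrArg (fun r : ℚ => (r : ℂ)) hkey
  push_cast at hkC
  have hne : ((k:ℂ)+1) ≠ 0 := by
    have : ((k+1 : ℕ) : ℂ) ≠ 0 := Nat.cast_ne_zero.mpr (Nat.succ_ne_zero k)
    push_cast at this; exact this
  rw [show ∀ B1 B2 : ℂ, (-1/((k:ℂ)+1) * B1 - (-1/((k:ℂ)+1) * B2)) = (B2 - B1)/((k:ℂ)+1)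
    from fun B1 B2 => by ring, ← mul_div_assoc, div_eq_iff hne]
  have : True := trivial
  linear_combination -hkC

end AuxEulerProof

/-- Proposition 6: for odd `f ≥ 1`, a Dirichlet character `χ` mod `f` with values in `ℂ`,
and a positive integer `k`, the analytic continuation
`L(s) = f^{-s} ∑_{a=1}^{f} χ(a)(-1)^a ζ_E(s, a/f)` of the Dirichlet `l`-series satisfies
`L(-k) = E_{k,χ} = f^k ∑_{a=0}^{f-1} χ(a)(-1)^a E_k(a/f)`. -/
theorem l_series_at_neg_int (f : ℕ) (hf : 0 < f) (hodd : Odd f)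
    (χ : DirichletCharacter ℂ f) (k : ℕ) (hk : 0 < k) :
    (f : ℂ) ^ (-(-(k : ℂ))) *
        ∑ a ∈ Finset.Icc 1 f, χ (a : ZMod f) * (-1) ^ a * eulerZetaC (-(k : ℂ)) ((a : ℝ) / f) =
      (f : ℂ) ^ k *
        ∑ a ∈ Finset.range f, χ (a : ZMod f) * (-1) ^ a * (eulerPoly k ((a : ℚ) / f) : ℂ) := by
  obtain ⟨m, rfl⟩ : ∃ m, f = m + 1 := ⟨f - 1, by omega⟩
  rw [neg_neg, Complex.cpow_natCast]
  congr 1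
  have hterm : ∀ a ∈ Finset.Icc 1 (m+1),
      χ (a : ZMod (m+1)) * (-1)^a * eulerZetaC (-(k:ℂ)) ((a:ℝ)/((m+1:ℕ):ℝ))
      = χ (a : ZMod (m+1)) * (-1)^a * ((eulerPoly k ((a:ℚ)/((m+1:ℕ):ℚ)) : ℚ) : ℂ) := by
    intro a ha
    obtain ⟨ha1, ha2⟩ := Finset.mem_Icc.mp ha
    have hr : ((a:ℝ)/((m+1:ℕ):ℝ)) = ((((a:ℚ)/((m+1:ℕ):ℚ)) : ℚ) : ℝ) := by push_cast; ring
    have hb0 : (0:ℚ) ≤ (a:ℚ)/((m+1:ℕ):ℚ) := by positivity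
    have hb1 : (a:ℚ)/((m+1:ℕ):ℚ) ≤ 1 := by
      rw [div_le_one (by positivity)]
      exact_mod_cast ha2
    rw [hr, euZ k (by omega) _ hb0 hb1]
  rw [Finset.sum_congr rfl hterm]
  have h1 : (1:ℕ) ≤ m + 1 := by omega
  rw [Finset.sum_Icc_succ_top h1]
  rw [Finset.range_eq_Ico, Nat.Ico_zero_eq_range]
  have hins : Finset.range (m+1) = insert 0 (Finset.Icc 1 m) := by
    ext x; simp [Finset.mem_Icc, Finset.mem_range]; omega
  rw [hins, Finset.sum_insert (by simp)]
  have hE : eulerPoly k 1 = - eulerPoly k 0 := by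
    have := eulerPoly_one_add_zero k hk; linarith
  have hlast : χ ((((m+1):ℕ)) : ZMod (m+1)) * (-1)^(m+1)
        * ((eulerPoly k (((m+1:ℕ):ℚ)/((m+1:ℕ):ℚ)) : ℚ) : ℂ)
      = χ (((0:ℕ)) : ZMod (m+1)) * (-1)^(0:ℕ) * ((eulerPoly k (((0:ℕ):ℚ)/((m+1:ℕ):ℚ)) : ℚ) : ℂ) := by
    rw [ZMod.natCast_self]
    rw [show (((m+1:ℕ):ℚ)/((m+1:ℕ):ℚ)) = 1 from div_self (by positivity)]
    rw [Odd.neg_one_pow hodd]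
    rw [hE]
    push_cast
    ring_nf
  rw [hlast]
  ring
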